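/- Let g_{2m}(x) = ∏_{i=0}^{m-1}(x² - [2i]²) and g^{(2m)}(x) = g_{2m}(x)/[2m]!. Then for every ℓ ∈ ℤ and m ≥ 1, g^{(2m)}([2ℓ]) lies in ℤ[q, q^{-1}]; explicitly g^{(2m)}([2ℓ]) = \binom{ℓ+m-1}{2m}_q ∏_{i=1-m}^{m}(q^{ℓ+i}+q^{-ℓ-i}) + g^{(2m-1)}([2ℓ]). -/

import Mathlib

open Finset Polynomial

noncomputable def q : RatFunc ℚ := RatFunc.X

noncomputable def qa (n : ℤ) : RatFunc ℚ := (q ^ n - q ^ (-n)) / (q - q⁻¹)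

noncomputable def qfac (n : ℕ) : RatFunc ℚ := ∏ k ∈ Finset.range n, qa ((k : ℤ) + 1)

noncomputable def qbin (a : ℤ) (n : ℕ) : RatFunc ℚ :=
  ∏ k ∈ Finset.range n, qa (a - (k : ℤ)) / qa ((k : ℤ) + 1)

noncomputable def qa2 (n : ℤ) : RatFunc ℚ :=
  (q ^ (2 * n) - q ^ (-(2 * n))) / (q ^ (2 : ℤ) - q ^ (-2 : ℤ))

noncomputable def qbin2 (a : ℤ) (n : ℕ) : RatFunc ℚ :=
  ∏ k ∈ Finset.range n, qa2 (a - (k : ℤ)) / qa2 ((k : ℤ) + 1)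

noncomputable def LaurentZ : Subring (RatFunc ℚ) := Subring.closure {q, q⁻¹}

noncomputable def NatLaurent : Subsemiring (RatFunc ℚ) := Subsemiring.closure {q⁻¹}

/-- g^{(2m)}([2ℓ]) where g_{2m}(x) = ∏_{i=0}^{m-1} (x² - [2i]²). -/
noncomputable def gEvenEval (ℓ : ℤ) (m : ℕ) : RatFunc ℚ :=
  (∏ i ∈ Finset.range m, (qa (2 * ℓ) ^ 2 - qa (2 * (i : ℤ)) ^ 2)) / qfac (2 * m)

/-- g^{(2m-1)}([2ℓ]) where g_{2m-1}(x) = x·∏_{i=1}^{m-1} (x² - [2i]²). -/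
noncomputable def gOddEval' (ℓ : ℤ) (m : ℕ) : RatFunc ℚ :=
  (qa (2 * ℓ) * ∏ i ∈ Finset.range (m - 1), (qa (2 * ℓ) ^ 2 - qa (2 * ((i : ℤ) + 1)) ^ 2))
    / qfac (2 * m - 1)

/-!
Since `[a]² - [b]² = [a+b][a-b]`, the numerator of `g^{(2m-1)}([2ℓ])` is `∏_{|j-ℓ| < m} [2j]`, and
that of `g^{(2m)}([2ℓ])` is `[2ℓ]` times it. Splitting `[2j] = [j] (q^j + q^{-j})` turns
`∏_{|j-ℓ| < m} [j]` into the numerator of `\binom{ℓ+m-1}{2m-1}`, and `[ℓ-m]` times it into that of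
`\binom{ℓ+m-1}{2m}`, so the identity comes down to `[2ℓ] - [2m] = [ℓ-m] (q^{ℓ+m} + q^{-ℓ-m})`.
Both terms then lie in `ℤ[q, q⁻¹]` because q-binomials do: for `a ≥ 0` by the q-Pascal rule, and
for `a < 0` by the reflection `\binom{a}{n} = (-1)^n \binom{n-1-a}{n}`.
-/

lemma q_ne_zero : q ≠ 0 := RatFunc.X_ne_zero

lemma intDegree_q_zpow (n : ℤ) : (q ^ n).intDegree = n := by
  have hpow (k : ℕ) : (q ^ k).intDegree = k := by
    induction k with
    | zero => simp
    | succ k ih =>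
      rw [pow_succ, RatFunc.intDegree_mul (pow_ne_zero _ q_ne_zero) q_ne_zero, ih, q,
        RatFunc.intDegree_X]
      push_cast; rfl
  obtain ⟨k, rfl | rfl⟩ := Int.eq_nat_or_neg n
  · simpa using hpow k
  · simp [zpow_neg, RatFunc.intDegree_inv, hpow]

lemma q_zpow_injective : Function.Injective (q ^ · : ℤ → RatFunc ℚ) := fun a b h => by
  simpa only [intDegree_q_zpow] using congrArg RatFunc.intDegree h

lemma q_sub_q_inv_ne_zero : q - q⁻¹ ≠ 0 := by
  rw [sub_ne_zero, ← zpow_neg_one]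
  intro h
  have := @q_zpow_injective 1 (-1) (by simpa using h)
  omega

lemma qa_ne_zero {n : ℤ} (hn : n ≠ 0) : qa n ≠ 0 :=
  div_ne_zero (sub_ne_zero.mpr fun h => hn (by linarith [q_zpow_injective h]))
    q_sub_q_inv_ne_zero

lemma qa_zero : qa 0 = 0 := by simp [qa]

lemma qa_neg (n : ℤ) : qa (-n) = -qa n := by
  rw [qa, qa, neg_neg, ← neg_div, neg_sub]

lemma qa_eq_add (a k : ℤ) : qa a = q ^ k * qa (a - k) + q ^ (k - a) * qa k := by
  have := q_ne_zero
  simp only [qa, zpow_sub₀ q_ne_zero, zpow_neg]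
  field_simp
  ring

lemma qa_two_mul (n : ℤ) : qa (2 * n) = qa n * (q ^ n + q ^ (-n)) := by
  have := q_ne_zero
  simp only [qa, two_mul, zpow_add₀ q_ne_zero, zpow_neg]
  field_simp
  ring

lemma qa_sq_sub_sq (a b : ℤ) : qa a ^ 2 - qa b ^ 2 = qa (a + b) * qa (a - b) := by
  have := q_ne_zero
  simp only [qa, zpow_add₀ q_ne_zero, zpow_sub₀ q_ne_zero, zpow_neg]
  field_simp
  ring

lemma qa_two_mul_sub_qa_two_mul (l m : ℤ) :
    qa (2 * l) - qa (2 * m) = qa (l - m) * (q ^ (l + m) + q ^ (-(l + m))) := by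
  have := q_ne_zero
  simp only [qa, two_mul, zpow_add₀ q_ne_zero, zpow_sub₀ q_ne_zero, zpow_neg]
  field_simp
  ring

lemma q_zpow_mem (n : ℤ) : q ^ n ∈ LaurentZ := by
  have hq : q ∈ LaurentZ := Subring.subset_closure (by simp)
  have hq_inv : q⁻¹ ∈ LaurentZ := Subring.subset_closure (by simp)
  obtain ⟨k, rfl | rfl⟩ := Int.eq_nat_or_neg n
  · simpa using pow_mem hq k
  · simpa using pow_mem hq_inv k

lemma q_zpow_add_q_zpow_neg_mem (n : ℤ) : q ^ n + q ^ (-n) ∈ LaurentZ :=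
  add_mem (q_zpow_mem n) (q_zpow_mem (-n))

lemma qfac_succ (n : ℕ) : qfac (n + 1) = qfac n * qa ((n : ℤ) + 1) :=
  prod_range_succ _ n

lemma qfac_ne_zero (n : ℕ) : qfac n ≠ 0 :=
  prod_ne_zero_iff.mpr fun k _ => qa_ne_zero (by omega)

lemma qbin_eq_div (a : ℤ) (n : ℕ) :
    qbin a n = (∏ k ∈ range n, qa (a - k)) / qfac n :=
  prod_div_distrib _ _

lemma prod_range_sub_eq_prod_Ioc {M : Type*} [CommMonoid M] (f : ℤ → M) (a : ℤ) (n : ℕ) :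
    ∏ k ∈ range n, f (a - k) = ∏ j ∈ Ioc (a - n) a, f j := by
  induction n with
  | zero => simp
  | succ n ih =>
    have hIoc : Ioc (a - (n + 1 : ℕ)) a = insert (a - n) (Ioc (a - n) a) := by
      ext j; simp only [mem_Ioc, mem_insert]; omega
    rw [prod_range_succ, ih, hIoc, prod_insert (by simp), mul_comm]

lemma qbin_eq_prod_Ioc_div (a : ℤ) (n : ℕ) :
    qbin a n = (∏ j ∈ Ioc (a - n) a, qa j) / qfac n := by
  rw [qbin_eq_div, prod_range_sub_eq_prod_Ioc]

lemma qbin_succ (a : ℤ) (n : ℕ) :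
    qbin a (n + 1) = q ^ ((n : ℤ) + 1) * qbin (a - 1) (n + 1)
      + q ^ ((n : ℤ) + 1 - a) * qbin (a - 1) n := by
  have hnum : ∏ k ∈ range (n + 1), qa (a - k) = qa a * ∏ k ∈ range n, qa (a - 1 - k) := by
    rw [prod_range_succ', mul_comm]
    simp only [Nat.cast_add, Nat.cast_one, Nat.cast_zero, sub_zero, sub_add_eq_sub_sub_swap]
  have := qfac_ne_zero n
  have := qa_ne_zero (n := (n : ℤ) + 1) (by omega)
  rw [qbin_eq_div, qbin_eq_div, qbin_eq_div, hnum, prod_range_succ, qfac_succ,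
    qa_eq_add a ((n : ℤ) + 1)]
  field_simp
  ring_nf

lemma qbin_natCast_mem (N n : ℕ) : qbin N n ∈ LaurentZ := by
  induction N generalizing n with
  | zero =>
    cases n with
    | zero => simp [qbin]
    | succ k => simp [qbin, prod_range_succ', qa_zero]
  | succ N ih =>
    cases n with
    | zero => simp [qbin]
    | succ k =>
      rw [Nat.cast_succ, qbin_succ, add_sub_cancel_right]
      exact add_mem (mul_mem (q_zpow_mem _) (ih _)) (mul_mem (q_zpow_mem _) (ih _))

lemma qbin_eq_neg_one_pow_mul (a : ℤ) (n : ℕ) :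
    qbin a n = (-1) ^ n * qbin ((n : ℤ) - 1 - a) n := by
  have hreflect : ∏ k ∈ range n, qa ((n : ℤ) - 1 - a - k) = ∏ k ∈ range n, qa (k - a) := by
    rw [← prod_range_reflect]
    refine prod_congr rfl fun k hk => ?_
    rw [mem_range] at hk
    congr 1
    omega
  have hneg : ∏ k ∈ range n, qa (a - k) = (-1) ^ n * ∏ k ∈ range n, qa (k - a) := by
    rw [← card_range n, ← prod_const, card_range, ← prod_mul_distrib]
    refine prod_congr rfl fun k _ => ?_
    rw [← neg_sub, qa_neg, neg_one_mul]
  rw [qbin_eq_div, qbin_eq_div, hreflect, hneg, mul_div_assoc]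

lemma qbin_mem (a : ℤ) (n : ℕ) : qbin a n ∈ LaurentZ := by
  rcases le_or_gt 0 a with ha | ha
  · lift a to ℕ using ha
    exact qbin_natCast_mem a n
  · rw [qbin_eq_neg_one_pow_mul]
    lift (n : ℤ) - 1 - a to ℕ using (by omega) with N
    exact mul_mem (pow_mem (neg_mem (one_mem _)) n) (qbin_natCast_mem N n)

lemma qa_two_mul_mul_prod_range (l : ℤ) (n : ℕ) :
    qa (2 * l) * ∏ i ∈ range n, (qa (2 * l) ^ 2 - qa (2 * ((i : ℤ) + 1)) ^ 2)
      = ∏ j ∈ Icc (l - n) (l + n), qa (2 * j) := by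
  induction n with
  | zero => simp
  | succ n ih =>
    have hIcc : Icc (l - (n + 1 : ℕ)) (l + (n + 1 : ℕ))
        = insert (l - n - 1) (insert (l + n + 1) (Icc (l - n) (l + n))) := by
      ext j; simp only [mem_Icc, mem_insert]; omega
    rw [prod_range_succ, ← mul_assoc, ih, hIcc, prod_insert (by simp; omega),
      prod_insert (by simp), qa_sq_sub_sq]
    ring_nf

lemma gOddEval'_succ (l : ℤ) (n : ℕ) :
    gOddEval' l (n + 1) = (∏ j ∈ Icc (l - n) (l + n), qa (2 * j)) / qfac (2 * n + 1) := by
  rw [gOddEval', Nat.add_sub_cancel, qa_two_mul_mul_prod_range]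
  rfl

lemma gEvenEval_succ (l : ℤ) (n : ℕ) :
    gEvenEval l (n + 1)
      = qa (2 * l) * (∏ j ∈ Icc (l - n) (l + n), qa (2 * j)) / qfac (2 * n + 2) := by
  rw [gEvenEval, prod_range_succ', ← qa_two_mul_mul_prod_range]
  push_cast
  simp only [qa_zero]
  ring_nf

lemma prod_qa_two_mul (s : Finset ℤ) :
    ∏ j ∈ s, qa (2 * j) = (∏ j ∈ s, qa j) * ∏ j ∈ s, (q ^ j + q ^ (-j)) := by
  rw [← prod_mul_distrib]
  exact prod_congr rfl fun j _ => qa_two_mul j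

lemma gOddEval'_succ_eq_qbin_mul (l : ℤ) (n : ℕ) :
    gOddEval' l (n + 1)
      = qbin (l + n) (2 * n + 1) * ∏ j ∈ Icc (l - n) (l + n), (q ^ j + q ^ (-j)) := by
  have hIoc : Ioc (l + n - (2 * n + 1 : ℕ)) (l + n) = Icc (l - n) (l + n) := by
    ext j; simp only [mem_Ioc, mem_Icc]; omega
  rw [gOddEval'_succ, prod_qa_two_mul, qbin_eq_prod_Ioc_div, hIoc]
  ring

lemma gEvenEval_succ_eq (l : ℤ) (n : ℕ) :
    gEvenEval l (n + 1)
      = qbin (l + n) (2 * n + 2) * (q ^ (l + n + 1) + q ^ (-(l + n + 1)))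
          * ∏ j ∈ Icc (l - n) (l + n), (q ^ j + q ^ (-j))
        + gOddEval' l (n + 1) := by
  have hIoc : Ioc (l + n - (2 * n + 2 : ℕ)) (l + n)
      = insert (l - n - 1) (Icc (l - n) (l + n)) := by
    ext j; simp only [mem_Ioc, mem_Icc, mem_insert]; omega
  have hfac : qfac (2 * n + 2) = qfac (2 * n + 1) * qa (2 * ((n : ℤ) + 1)) := by
    rw [qfac_succ]; push_cast; ring_nf
  have hkey : qa (2 * l) - qa (2 * ((n : ℤ) + 1))
      = qa (l - n - 1) * (q ^ (l + n + 1) + q ^ (-(l + n + 1))) := by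
    rw [qa_two_mul_sub_qa_two_mul]; ring_nf
  have := qfac_ne_zero (2 * n + 1)
  have := qa_ne_zero (n := 2 * ((n : ℤ) + 1)) (by omega)
  rw [gEvenEval_succ, gOddEval'_succ, qbin_eq_prod_Ioc_div, hIoc, prod_insert (by simp),
    prod_qa_two_mul, hfac]
  field_simp
  linear_combination (∏ j ∈ Icc (l - n) (l + n), qa j)
    * (∏ j ∈ Icc (l - n) (l + n), (q ^ j + q ^ (-j))) * hkey

lemma gEvenEval_succ_mem (l : ℤ) (n : ℕ) : gEvenEval l (n + 1) ∈ LaurentZ := by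
  have hprod_mem : ∏ j ∈ Icc (l - n) (l + n), (q ^ j + q ^ (-j)) ∈ LaurentZ :=
    prod_mem fun j _ => q_zpow_add_q_zpow_neg_mem j
  rw [gEvenEval_succ_eq, gOddEval'_succ_eq_qbin_mul]
  exact add_mem (mul_mem (mul_mem (qbin_mem _ _) (q_zpow_add_q_zpow_neg_mem _)) hprod_mem)
    (mul_mem (qbin_mem _ _) hprod_mem)

theorem stmt3 (ℓ : ℤ) (m : ℕ) (hm : 1 ≤ m) :
    gEvenEval ℓ m ∈ LaurentZ ∧
    gEvenEval ℓ m = qbin (ℓ + m - 1) (2 * m)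
        * ∏ i ∈ Finset.Icc (1 - (m : ℤ)) (m : ℤ), (q ^ (ℓ + i) + q ^ (-(ℓ + i)))
      + gOddEval' ℓ m := by
  obtain ⟨n, rfl⟩ := Nat.exists_eq_add_of_le' hm
  refine ⟨gEvenEval_succ_mem ℓ n, ?_⟩
  have hbin : qbin (ℓ + ((n + 1 : ℕ) : ℤ) - 1) (2 * (n + 1)) = qbin (ℓ + n) (2 * n + 2) := by
    congr 1; push_cast; ring
  have hIcc : Icc (ℓ + (1 - ((n + 1 : ℕ) : ℤ))) (ℓ + ((n + 1 : ℕ) : ℤ))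
      = insert (ℓ + n + 1) (Icc (ℓ - n) (ℓ + n)) := by
    ext j; simp only [mem_Icc, mem_insert]; omega
  have hprod : ∏ i ∈ Icc (1 - ((n + 1 : ℕ) : ℤ)) ((n + 1 : ℕ) : ℤ), (q ^ (ℓ + i) + q ^ (-(ℓ + i)))
      = (q ^ (ℓ + n + 1) + q ^ (-(ℓ + n + 1))) * ∏ j ∈ Icc (ℓ - n) (ℓ + n), (q ^ j + q ^ (-j)) :=
    calc _ = ∏ j ∈ (Icc _ _).map (addLeftEmbedding ℓ), (q ^ j + q ^ (-j)) := (prod_map _ _ _).symm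
      _ = _ := by rw [map_add_left_Icc, hIcc, prod_insert (by simp)]
  rw [hbin, hprod, ← mul_assoc, gEvenEval_succ_eq]
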